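/- Let g be in Monge form with k₁ ≠ k₂ as above. The origin is a second order ridge point relative to v₁ (v₁κ₁(0) = v₁²κ₁(0) = 0, v₁³κ₁(0) ≠ 0) if and only if a₃₀ = 0, 3a₂₁² + (a₄₀ − 3k₁³)(k₁−k₂) = 0, and 15a₂₁²a₁₂ + 10a₂₁a₃₁(k₁−k₂) + a₅₀(k₁−k₂)² ≠ 0. -/

import Mathlib

noncomputable section

/-- Partial derivative in the first variable. -/
def pdu (f : ℝ × ℝ → ℝ) (p : ℝ × ℝ) : ℝ := fderiv ℝ f p (1, 0)

/-- Partial derivative in the second variable. -/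
def pdv (f : ℝ × ℝ → ℝ) (p : ℝ × ℝ) : ℝ := fderiv ℝ f p (0, 1)

/-- Coefficient `E` of the first fundamental form of the Monge surface `(u,v,f(u,v))`. -/
def Ee (f : ℝ × ℝ → ℝ) (p : ℝ × ℝ) : ℝ := 1 + (pdu f p) ^ 2

/-- Coefficient `F` of the first fundamental form. -/
def Ff (f : ℝ × ℝ → ℝ) (p : ℝ × ℝ) : ℝ := pdu f p * pdv f p

/-- Coefficient `G` of the first fundamental form. -/
def Gg (f : ℝ × ℝ → ℝ) (p : ℝ × ℝ) : ℝ := 1 + (pdv f p) ^ 2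

/-- Coefficient `L` of the second fundamental form. -/
def Ll (f : ℝ × ℝ → ℝ) (p : ℝ × ℝ) : ℝ :=
  pdu (pdu f) p / Real.sqrt (1 + (pdu f p) ^ 2 + (pdv f p) ^ 2)

/-- Coefficient `M` of the second fundamental form. -/
def Mm (f : ℝ × ℝ → ℝ) (p : ℝ × ℝ) : ℝ :=
  pdv (pdu f) p / Real.sqrt (1 + (pdu f p) ^ 2 + (pdv f p) ^ 2)

/-- Coefficient `N` of the second fundamental form. -/
def Nn (f : ℝ × ℝ → ℝ) (p : ℝ × ℝ) : ℝ :=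
  pdv (pdv f) p / Real.sqrt (1 + (pdu f p) ^ 2 + (pdv f p) ^ 2)

/-- `κ p` is a principal curvature of the Monge surface `(u,v,f(u,v))` at `p`:
it is a root of the characteristic equation
`(EG-F²)κ² - (EN-2FM+GL)κ + (LN-M²) = 0`. -/
def IsPrincipalCurvature (f : ℝ × ℝ → ℝ) (κ : ℝ × ℝ → ℝ) (p : ℝ × ℝ) : Prop :=
  (Ee f p * Gg f p - Ff f p ^ 2) * κ p ^ 2
    - (Ee f p * Nn f p - 2 * Ff f p * Mm f p + Gg f p * Ll f p) * κ p
    + (Ll f p * Nn f p - Mm f p ^ 2) = 0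

/-- `w` is a unit principal vector field for the principal curvature function `κ`:
`II·w = κ I·w` and `w` has unit length with respect to the first fundamental form. -/
def IsPrincipalField (f : ℝ × ℝ → ℝ) (κ : ℝ × ℝ → ℝ) (w : ℝ × ℝ → ℝ × ℝ)
    (p : ℝ × ℝ) : Prop :=
  Ll f p * (w p).1 + Mm f p * (w p).2 = κ p * (Ee f p * (w p).1 + Ff f p * (w p).2) ∧
  Mm f p * (w p).1 + Nn f p * (w p).2 = κ p * (Ff f p * (w p).1 + Gg f p * (w p).2) ∧
  Ee f p * (w p).1 ^ 2 + 2 * Ff f p * (w p).1 * (w p).2 + Gg f p * (w p).2 ^ 2 = 1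

/-- Directional derivative of a function along a vector field. -/
def dirDeriv (w : ℝ × ℝ → ℝ × ℝ) (h : ℝ × ℝ → ℝ) (p : ℝ × ℝ) : ℝ :=
  fderiv ℝ h p (w p)

/-! The criterion is a computation with jets at the origin. Germs at `0` of functions that are
`C^∞` at `0` form a commutative ring on which `∂/∂u` and `∂/∂v` act as commuting derivations and
evaluation at `0` is a ring homomorphism. In this ring the principal-direction equations
`II·v₁ = κ₁ I·v₁`, cleared of the area element `W = √(1 + f_u² + f_v²)`, and the unit-length
condition on `v₁ = (w₁, w₂)` become polynomial identities. Differentiating them up to three times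
and evaluating at `0` determines, one after the other, the jets of `W`, of `v₁` and of `κ₁`; the
derivatives of `w₂` are obtained by dividing by `k₁ - k₂`. The result is `v₁κ₁(0) = a₃₀`,
`(k₁ - k₂) v₁²κ₁(0) = 3a₂₁² + (a₄₀ - 3k₁³)(k₁ - k₂)` and
`(k₁ - k₂)² v₁³κ₁(0) = 15a₂₁²a₁₂ + 10a₂₁a₃₁(k₁ - k₂) + a₅₀(k₁ - k₂)²
  - a₃₀(9a₂₁² + 19k₁²(k₁ - k₂)²)`, from which the criterion is read off. -/

open Filter Topology
open scoped ContDiff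

section SmoothGerms

variable {E : Type*} [NormedAddCommGroup E] [NormedSpace ℝ E] {x : E}

theorem ContDiffAt.fderiv_right_apply {g : E → ℝ} (hg : ContDiffAt ℝ ∞ g x) (v : E) :
    ContDiffAt ℝ ∞ (fun p => fderiv ℝ g p v) x :=
  (hg.fderiv_right (by simp)).clm_apply contDiffAt_const

theorem ContDiffAt.eventually_differentiableAt {g : E → ℝ} (hg : ContDiffAt ℝ ∞ g x) :
    ∀ᶠ p in 𝓝 x, DifferentiableAt ℝ g p :=
  ((hg.of_le (by simp) : ContDiffAt ℝ 1 g x).eventually (by simp)).mono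
    fun _ hp => hp.differentiableAt one_ne_zero

theorem ContDiffAt.fderiv_fderiv_apply_comm {g : E → ℝ} (hg : ContDiffAt ℝ 2 g x) (v w : E) :
    fderiv ℝ (fun q => fderiv ℝ g q w) x v = fderiv ℝ (fun q => fderiv ℝ g q v) x w := by
  have hdiff : DifferentiableAt ℝ (fderiv ℝ g) x :=
    (hg.fderiv_right (m := 1) (by norm_num)).differentiableAt one_ne_zero
  rw [fderiv_clm_apply hdiff (differentiableAt_const _),
    fderiv_clm_apply hdiff (differentiableAt_const _)]
  simpa using (hg.isSymmSndFDerivAt (by simp)) v w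

def Filter.Germ.fderivApply (v : E) : Germ (𝓝 x) ℝ → Germ (𝓝 x) ℝ :=
  Germ.map' (fun (g : E → ℝ) p => fderiv ℝ g p v) fun _ _ h =>
    (h.fderiv (𝕜 := ℝ)).mono fun _ hp => congrArg (fun L : E →L[ℝ] ℝ => L v) hp

theorem Filter.Germ.fderivApply_coe (v : E) (g : E → ℝ) :
    Germ.fderivApply v (g : Germ (𝓝 x) ℝ) = ↑(fun p => fderiv ℝ g p v) :=
  rfl

def smoothGerms (x : E) : Subring (Germ (𝓝 x) ℝ) where
  carrier := {φ | ∃ g : E → ℝ, ContDiffAt ℝ ∞ g x ∧ ↑g = φ}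
  mul_mem' := by
    rintro _ _ ⟨a, ha, rfl⟩ ⟨b, hb, rfl⟩
    exact ⟨a * b, ha.mul hb, rfl⟩
  one_mem' := ⟨1, contDiffAt_const, rfl⟩
  add_mem' := by
    rintro _ _ ⟨a, ha, rfl⟩ ⟨b, hb, rfl⟩
    exact ⟨a + b, ha.add hb, rfl⟩
  zero_mem' := ⟨0, contDiffAt_const, rfl⟩
  neg_mem' := by
    rintro _ ⟨a, ha, rfl⟩
    exact ⟨-a, ha.neg, rfl⟩

namespace smoothGerms

def mk (g : E → ℝ) (hg : ContDiffAt ℝ ∞ g x) : smoothGerms x :=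
  ⟨g, g, hg, rfl⟩

@[simp]
theorem coe_mk (g : E → ℝ) (hg : ContDiffAt ℝ ∞ g x) :
    ((mk g hg : smoothGerms x) : Germ (𝓝 x) ℝ) = g :=
  rfl

theorem mk_eq_mk {a b : E → ℝ} {ha hb} (h : a =ᶠ[𝓝 x] b) : (mk a ha : smoothGerms x) = mk b hb :=
  Subtype.ext (Germ.coe_eq.mpr h)

def eval : smoothGerms x →+* ℝ :=
  Germ.valueRingHom.comp (smoothGerms x).subtype

@[simp]
theorem eval_mk (g : E → ℝ) (hg : ContDiffAt ℝ ∞ g x) : eval (mk g hg) = g x :=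
  rfl

def fderivApplyAddHom (v : E) : smoothGerms x →+ smoothGerms x where
  toFun φ := ⟨Germ.fderivApply v φ.1, by
    obtain ⟨_, g, hg, rfl⟩ := φ
    exact ⟨_, hg.fderiv_right_apply v, (Germ.fderivApply_coe v g).symm⟩⟩
  map_zero' := by
    apply Subtype.ext
    show Germ.fderivApply v ((0 : E → ℝ) : Germ (𝓝 x) ℝ) = ((0 : E → ℝ) : Germ (𝓝 x) ℝ)
    rw [Germ.fderivApply_coe]
    exact Germ.coe_eq.mpr (Eventually.of_forall fun p => by simp)
  map_add' := by
    rintro ⟨_, a, ha, rfl⟩ ⟨_, b, hb, rfl⟩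
    apply Subtype.ext
    show Germ.fderivApply v ((a + b : E → ℝ) : Germ (𝓝 x) ℝ) =
      ↑(fun p => fderiv ℝ a p v) + ↑(fun p => fderiv ℝ b p v)
    rw [Germ.fderivApply_coe]
    refine Germ.coe_eq.mpr ?_
    filter_upwards [ha.eventually_differentiableAt, hb.eventually_differentiableAt] with p hap hbp
    simp [fderiv_add hap hbp]

def derivation (v : E) : Derivation ℤ (smoothGerms x) (smoothGerms x) :=
  Derivation.mk' (fderivApplyAddHom v).toIntLinearMap <| by
    rintro ⟨_, a, ha, rfl⟩ ⟨_, b, hb, rfl⟩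
    apply Subtype.ext
    show Germ.fderivApply v ((a * b : E → ℝ) : Germ (𝓝 x) ℝ) =
      ↑(a * fun p => fderiv ℝ b p v) + ↑(b * fun p => fderiv ℝ a p v)
    rw [Germ.fderivApply_coe]
    refine Germ.coe_eq.mpr ?_
    filter_upwards [ha.eventually_differentiableAt, hb.eventually_differentiableAt] with p hap hbp
    simp [fderiv_mul hap hbp]

theorem derivation_mk (v : E) (g : E → ℝ) (hg : ContDiffAt ℝ ∞ g x) :
    derivation v (mk g hg) = mk (fun p => fderiv ℝ g p v) (hg.fderiv_right_apply v) :=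
  rfl

theorem derivation_comm (v w : E) (φ : smoothGerms x) :
    derivation v (derivation w φ) = derivation w (derivation v φ) := by
  obtain ⟨_, g, hg, rfl⟩ := φ
  change derivation v (derivation w (mk g hg)) = derivation w (derivation v (mk g hg))
  simp only [derivation_mk]
  exact mk_eq_mk <| by
    filter_upwards [(hg.of_le ENat.LEInfty.out : ContDiffAt ℝ 2 g x).eventually (by simp)]
      with p hp
    exact hp.fderiv_fderiv_apply_comm v w

end smoothGerms

end SmoothGerms

section JetComputation

variable {S : Type*} [CommRing S]

/-- The jet-level content of a Monge patch `f` with principal curvature `κ`, unit principal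
field `(w₁, w₂)` and area element `W = √(1 + f_u² + f_v²)`, under the normalization
`f_u = f_v = f_uv = 0`, `κ = f_uu`, `(w₁, w₂) = (1, 0)` at the origin. `principal_u` and
`principal_v` are `II·w = κ I·w` multiplied by `W`; `unit` says that the lifted tangent vector
`(w₁, w₂, f_u w₁ + f_v w₂)` has length one. Only additivity and the Leibniz rule of `Du`, `Dv` are
used, so `ℤ`-derivations suffice. -/
structure IsMongePrincipalFrame (Du Dv : Derivation ℤ S S) (ev : S →+* ℝ) (f κ w₁ w₂ W : S) :
    Prop where
  comm : ∀ a, Du (Dv a) = Dv (Du a)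
  sq_W : W ^ 2 = 1 + Du f ^ 2 + Dv f ^ 2
  principal_u : Du (Du f) * w₁ + Dv (Du f) * w₂ =
    κ * W * ((1 + Du f ^ 2) * w₁ + Du f * Dv f * w₂)
  principal_v : Dv (Du f) * w₁ + Dv (Dv f) * w₂ =
    κ * W * (Du f * Dv f * w₁ + (1 + Dv f ^ 2) * w₂)
  unit : w₁ ^ 2 + w₂ ^ 2 + (Du f * w₁ + Dv f * w₂) ^ 2 = 1
  ev_Du : ev (Du f) = 0
  ev_Dv : ev (Dv f) = 0
  ev_DvDu : ev (Dv (Du f)) = 0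
  ev_κ : ev κ = ev (Du (Du f))
  ev_w₁ : ev w₁ = 1
  ev_w₂ : ev w₂ = 0
  ev_W : ev W = 1
  not_umbilic : ev (Du (Du f)) ≠ ev (Dv (Dv f))

def frameDeriv (Du Dv : Derivation ℤ S S) (w₁ w₂ a : S) : S :=
  w₁ * Du a + w₂ * Dv a

namespace IsMongePrincipalFrame

variable {Du Dv : Derivation ℤ S S} {ev : S →+* ℝ} {f κ w₁ w₂ W : S}
  (h : IsMongePrincipalFrame Du Dv ev f κ w₁ w₂ W)
include h

local notation "k₁" => ev (Du (Du f))
local notation "k₂" => ev (Dv (Dv f))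
local notation "a₃₀" => ev (Du (Du (Du f)))
local notation "a₂₁" => ev (Dv (Du (Du f)))
local notation "a₁₂" => ev (Dv (Dv (Du f)))
local notation "a₄₀" => ev (Du (Du (Du (Du f))))
local notation "a₃₁" => ev (Dv (Du (Du (Du f))))
local notation "a₅₀" => ev (Du (Du (Du (Du (Du f)))))

theorem sub_ne_zero : k₁ - k₂ ≠ 0 := _root_.sub_ne_zero.mpr h.not_umbilic

theorem eval_Du_W : ev (Du W) = 0 := by
  have e := congrArg (fun a => ev (Du a)) h.sq_W
  simp only [pow_two, Derivation.leibniz, smul_eq_mul, map_add, map_mul, Derivation.map_one_eq_zero,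
    map_zero, h.comm, h.ev_Du, h.ev_Dv, h.ev_DvDu, h.ev_W] at e
  linear_combination e / 2

theorem eval_Dv_W : ev (Dv W) = 0 := by
  have e := congrArg (fun a => ev (Dv a)) h.sq_W
  simp only [pow_two, Derivation.leibniz, smul_eq_mul, map_add, map_mul, Derivation.map_one_eq_zero,
    map_zero, h.ev_Du, h.ev_Dv, h.ev_DvDu, h.ev_W] at e
  linear_combination e / 2

theorem eval_DuDu_W : ev (Du (Du W)) = k₁ ^ 2 := by
  have e := congrArg (fun a => ev (Du (Du a))) h.sq_W
  simp only [pow_two, Derivation.leibniz, smul_eq_mul, map_add, map_mul, Derivation.map_one_eq_zero,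
    map_zero, h.comm, h.ev_Du, h.ev_Dv, h.ev_DvDu, h.ev_W, h.eval_Du_W] at e
  linear_combination e / 2

theorem eval_DvDu_W : ev (Dv (Du W)) = 0 := by
  have e := congrArg (fun a => ev (Dv (Du a))) h.sq_W
  simp only [pow_two, Derivation.leibniz, smul_eq_mul, map_add, map_mul, Derivation.map_one_eq_zero,
    map_zero, h.comm, h.ev_Du, h.ev_Dv, h.ev_DvDu, h.ev_W, h.eval_Du_W, h.eval_Dv_W] at e
  linear_combination e / 2

theorem eval_DuDuDu_W : ev (Du (Du (Du W))) = 3 * k₁ * a₃₀ := by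
  have e := congrArg (fun a => ev (Du (Du (Du a)))) h.sq_W
  simp only [pow_two, Derivation.leibniz, smul_eq_mul, map_add, map_mul, Derivation.map_one_eq_zero,
    map_zero, h.comm, h.ev_Du, h.ev_Dv, h.ev_DvDu, h.ev_W, h.eval_Du_W, h.eval_DuDu_W] at e
  linear_combination e / 2

theorem eval_Du_w₁ : ev (Du w₁) = 0 := by
  have e := congrArg (fun a => ev (Du a)) h.unit
  simp only [pow_two, Derivation.leibniz, smul_eq_mul, map_add, map_mul, Derivation.map_one_eq_zero,
    map_zero, h.comm, h.ev_Du, h.ev_Dv, h.ev_DvDu, h.ev_w₁, h.ev_w₂] at e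
  linear_combination e / 2

theorem eval_Dv_w₁ : ev (Dv w₁) = 0 := by
  have e := congrArg (fun a => ev (Dv a)) h.unit
  simp only [pow_two, Derivation.leibniz, smul_eq_mul, map_add, map_mul, Derivation.map_one_eq_zero,
    map_zero, h.ev_Du, h.ev_Dv, h.ev_DvDu, h.ev_w₁, h.ev_w₂] at e
  linear_combination e / 2

theorem eval_Du_κ : ev (Du κ) = a₃₀ := by
  have e := congrArg (fun a => ev (Du a)) h.principal_u
  simp only [pow_two, Derivation.leibniz, smul_eq_mul, map_add, map_mul, Derivation.map_one_eq_zero,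
    map_zero, map_one, h.comm, h.ev_Du, h.ev_Dv, h.ev_DvDu, h.ev_κ, h.ev_w₁, h.ev_w₂, h.ev_W,
    h.eval_Du_W, h.eval_Du_w₁] at e
  linear_combination -e

theorem eval_Dv_κ : ev (Dv κ) = a₂₁ := by
  have e := congrArg (fun a => ev (Dv a)) h.principal_u
  simp only [pow_two, Derivation.leibniz, smul_eq_mul, map_add, map_mul, Derivation.map_one_eq_zero,
    map_zero, map_one, h.ev_Du, h.ev_Dv, h.ev_DvDu, h.ev_κ, h.ev_w₁, h.ev_w₂, h.ev_W, h.eval_Dv_W,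
    h.eval_Dv_w₁] at e
  linear_combination -e

theorem eval_Du_w₂ : ev (Du w₂) = a₂₁ / (k₁ - k₂) := by
  have e := congrArg (fun a => ev (Du a)) h.principal_v
  simp only [pow_two, Derivation.leibniz, smul_eq_mul, map_add, map_mul, Derivation.map_one_eq_zero,
    map_zero, map_one, h.comm, h.ev_Du, h.ev_Dv, h.ev_DvDu, h.ev_κ, h.ev_w₁, h.ev_w₂, h.ev_W,
    h.eval_Du_W, h.eval_Du_w₁] at e
  rw [eq_div_iff h.sub_ne_zero]
  linear_combination -e

theorem eval_Dv_w₂ : ev (Dv w₂) = a₁₂ / (k₁ - k₂) := by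
  have e := congrArg (fun a => ev (Dv a)) h.principal_v
  simp only [pow_two, Derivation.leibniz, smul_eq_mul, map_add, map_mul, Derivation.map_one_eq_zero,
    map_zero, map_one, h.ev_Du, h.ev_Dv, h.ev_DvDu, h.ev_κ, h.ev_w₁, h.ev_w₂, h.ev_W, h.eval_Dv_W,
    h.eval_Dv_w₁] at e
  rw [eq_div_iff h.sub_ne_zero]
  linear_combination -e

theorem eval_DuDu_w₁ : ev (Du (Du w₁)) = -ev (Du w₂) ^ 2 - k₁ ^ 2 := by
  have e := congrArg (fun a => ev (Du (Du a))) h.unit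
  simp only [pow_two, Derivation.leibniz, smul_eq_mul, map_add, map_mul, Derivation.map_one_eq_zero,
    map_zero, h.comm, h.ev_Du, h.ev_Dv, h.ev_DvDu, h.ev_w₁, h.ev_w₂, h.eval_Du_w₁] at e
  linear_combination e / 2

theorem eval_DuDu_w₂ : ev (Du (Du w₂)) = (a₃₁ + 2 * (a₁₂ - a₃₀) * ev (Du w₂)) / (k₁ - k₂) := by
  have e := congrArg (fun a => ev (Du (Du a))) h.principal_v
  simp only [pow_two, Derivation.leibniz, smul_eq_mul, map_add, map_mul, Derivation.map_one_eq_zero,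
    map_zero, map_one, h.comm, h.ev_Du, h.ev_Dv, h.ev_DvDu, h.ev_κ, h.ev_w₁, h.ev_w₂, h.ev_W,
    h.eval_Du_W, h.eval_Du_w₁, h.eval_DuDu_W, h.eval_DuDu_w₁, h.eval_Du_κ] at e
  rw [eq_div_iff h.sub_ne_zero]
  linear_combination -e

theorem eval_DuDu_κ : ev (Du (Du κ)) = 2 * ev (Du w₂) * a₂₁ + a₄₀ - 3 * k₁ ^ 3 := by
  have e := congrArg (fun a => ev (Du (Du a))) h.principal_u
  simp only [pow_two, Derivation.leibniz, smul_eq_mul, map_add, map_mul, Derivation.map_one_eq_zero,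
    map_zero, map_one, h.comm, h.ev_Du, h.ev_Dv, h.ev_DvDu, h.ev_κ, h.ev_w₁, h.ev_w₂, h.ev_W,
    h.eval_Du_W, h.eval_Du_w₁, h.eval_DuDu_W, h.eval_DuDu_w₁, h.eval_Du_κ] at e
  linear_combination -e

theorem eval_DvDu_κ : ev (Dv (Du κ)) = ev (Du w₂) * a₁₂ + ev (Dv w₂) * a₂₁ + a₃₁ := by
  have e := congrArg (fun a => ev (Dv (Du a))) h.principal_u
  simp only [pow_two, Derivation.leibniz, smul_eq_mul, map_add, map_mul, Derivation.map_one_eq_zero,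
    map_zero, map_one, h.comm, h.ev_Du, h.ev_Dv, h.ev_DvDu, h.ev_κ, h.ev_w₁, h.ev_w₂, h.ev_W,
    h.eval_Du_W, h.eval_Dv_W, h.eval_DvDu_W, h.eval_Du_w₁, h.eval_Dv_w₁, h.eval_Du_κ,
    h.eval_Dv_κ] at e
  linear_combination -e

theorem eval_DuDuDu_κ :
    ev (Du (Du (Du κ))) =
      3 * ev (Du (Du w₂)) * a₂₁ + 3 * ev (Du w₂) * a₃₁ - 18 * a₃₀ * k₁ ^ 2 + a₅₀ := by
  have e := congrArg (fun a => ev (Du (Du (Du a)))) h.principal_u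
  simp only [pow_two, Derivation.leibniz, smul_eq_mul, map_add, map_mul, Derivation.map_one_eq_zero,
    map_zero, map_one, h.comm, h.ev_Du, h.ev_Dv, h.ev_DvDu, h.ev_κ, h.ev_w₁, h.ev_w₂, h.ev_W,
    h.eval_Du_W, h.eval_DuDu_W, h.eval_DuDuDu_W, h.eval_Du_w₁, h.eval_DuDu_w₁, h.eval_Du_κ,
    h.eval_DuDu_κ] at e
  linear_combination -e

local notation "D" => frameDeriv Du Dv w₁ w₂

theorem eval_frameDeriv : ev (D κ) = a₃₀ := by
  simp only [frameDeriv, map_add, map_mul, h.ev_w₁, h.ev_w₂, h.eval_Du_κ, h.eval_Dv_κ]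
  ring

theorem eval_frameDeriv_frameDeriv_mul :
    ev (D (D κ)) * (k₁ - k₂) = 3 * a₂₁ ^ 2 + (a₄₀ - 3 * k₁ ^ 3) * (k₁ - k₂) := by
  have e : ev (D (D κ)) = 3 * ev (Du w₂) * a₂₁ + a₄₀ - 3 * k₁ ^ 3 := by
    simp only [frameDeriv, Derivation.leibniz, smul_eq_mul, map_add, map_mul, h.comm, h.ev_w₁,
      h.ev_w₂, h.eval_Du_w₁, h.eval_Dv_w₁, h.eval_Du_κ, h.eval_Dv_κ, h.eval_DuDu_κ, h.eval_DvDu_κ]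
    ring
  rw [e, h.eval_Du_w₂]
  field_simp [h.sub_ne_zero]
  ring

theorem eval_frameDeriv_frameDeriv_frameDeriv_mul :
    ev (D (D (D κ))) * (k₁ - k₂) ^ 2 = 15 * a₂₁ ^ 2 * a₁₂ + 10 * a₂₁ * a₃₁ * (k₁ - k₂) +
      a₅₀ * (k₁ - k₂) ^ 2 - a₃₀ * (9 * a₂₁ ^ 2 + 19 * k₁ ^ 2 * (k₁ - k₂) ^ 2) := by
  have e : ev (D (D (D κ))) = 4 * ev (Du (Du w₂)) * a₂₁ + 3 * ev (Du w₂) ^ 2 * a₁₂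
      - ev (Du w₂) ^ 2 * a₃₀ + 4 * ev (Du w₂) * ev (Dv w₂) * a₂₁ + 6 * ev (Du w₂) * a₃₁
      - 19 * a₃₀ * k₁ ^ 2 + a₅₀ := by
    simp only [frameDeriv, pow_two, Derivation.leibniz, smul_eq_mul, map_add, map_mul, h.comm,
      h.ev_w₁, h.ev_w₂, h.eval_Du_w₁, h.eval_Dv_w₁, h.eval_DuDu_w₁, h.eval_Du_κ, h.eval_Dv_κ,
      h.eval_DuDu_κ, h.eval_DvDu_κ, h.eval_DuDuDu_κ]
    ring
  rw [e, h.eval_DuDu_w₂, h.eval_Du_w₂, h.eval_Dv_w₂]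
  field_simp [h.sub_ne_zero]
  ring

end IsMongePrincipalFrame

end JetComputation

section MongePatch

theorem ContDiffAt.pdu {g : ℝ × ℝ → ℝ} {x : ℝ × ℝ} (hg : ContDiffAt ℝ ∞ g x) :
    ContDiffAt ℝ ∞ (pdu g) x :=
  hg.fderiv_right_apply _

theorem ContDiffAt.pdv {g : ℝ × ℝ → ℝ} {x : ℝ × ℝ} (hg : ContDiffAt ℝ ∞ g x) :
    ContDiffAt ℝ ∞ (pdv g) x :=
  hg.fderiv_right_apply _

theorem ContDiffAt.dirDeriv {w : ℝ × ℝ → ℝ × ℝ} {g : ℝ × ℝ → ℝ} {x : ℝ × ℝ}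
    (hw : ContDiffAt ℝ ∞ w x) (hg : ContDiffAt ℝ ∞ g x) : ContDiffAt ℝ ∞ (dirDeriv w g) x :=
  (hg.fderiv_right (by simp)).clm_apply hw

theorem dirDeriv_eq (w : ℝ × ℝ → ℝ × ℝ) (g : ℝ × ℝ → ℝ) (p : ℝ × ℝ) :
    dirDeriv w g p = (w p).1 * pdu g p + (w p).2 * pdv g p := by
  have hsplit : w p = (w p).1 • ((1, 0) : ℝ × ℝ) + (w p).2 • ((0, 1) : ℝ × ℝ) := by
    ext <;> simp
  rw [dirDeriv, hsplit, map_add, map_smul, map_smul]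
  simp [pdu, pdv]

def areaElement (f : ℝ × ℝ → ℝ) (p : ℝ × ℝ) : ℝ :=
  √(1 + pdu f p ^ 2 + pdv f p ^ 2)

theorem ContDiffAt.areaElement {f : ℝ × ℝ → ℝ} {x : ℝ × ℝ} (hf : ContDiffAt ℝ ∞ f x) :
    ContDiffAt ℝ ∞ (areaElement f) x :=
  ((contDiffAt_const.add (hf.pdu.pow 2)).add (hf.pdv.pow 2)).sqrt (by positivity)

theorem IsPrincipalField.mul_areaElement {f κ : ℝ × ℝ → ℝ} {w : ℝ × ℝ → ℝ × ℝ} {p : ℝ × ℝ}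
    (h : IsPrincipalField f κ w p) :
    pdu (pdu f) p * (w p).1 + pdv (pdu f) p * (w p).2 =
        κ p * areaElement f p * (Ee f p * (w p).1 + Ff f p * (w p).2) ∧
      pdv (pdu f) p * (w p).1 + pdv (pdv f) p * (w p).2 =
        κ p * areaElement f p * (Ff f p * (w p).1 + Gg f p * (w p).2) := by
  obtain ⟨h₁, h₂, -⟩ := h
  have hW : √(1 + pdu f p ^ 2 + pdv f p ^ 2) ≠ 0 := (Real.sqrt_pos.mpr (by positivity)).ne'
  simp only [Ll, Mm, Nn] at h₁ h₂
  unfold areaElement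
  constructor
  · field_simp at h₁
    linear_combination h₁
  · field_simp at h₂
    linear_combination h₂

theorem derivation_mk_eq_pdu {x : ℝ × ℝ} (g : ℝ × ℝ → ℝ) (hg : ContDiffAt ℝ ∞ g x) :
    smoothGerms.derivation (1, 0) (smoothGerms.mk g hg) = smoothGerms.mk (pdu g) hg.pdu :=
  rfl

theorem derivation_mk_eq_pdv {x : ℝ × ℝ} (g : ℝ × ℝ → ℝ) (hg : ContDiffAt ℝ ∞ g x) :
    smoothGerms.derivation (0, 1) (smoothGerms.mk g hg) = smoothGerms.mk (pdv g) hg.pdv :=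
  rfl

theorem frameDeriv_mk {w : ℝ × ℝ → ℝ × ℝ} {g : ℝ × ℝ → ℝ} {x : ℝ × ℝ}
    (hw₁ : ContDiffAt ℝ ∞ (fun p => (w p).1) x) (hw₂ : ContDiffAt ℝ ∞ (fun p => (w p).2) x)
    (hg : ContDiffAt ℝ ∞ g x) :
    frameDeriv (smoothGerms.derivation (1, 0)) (smoothGerms.derivation (0, 1))
        (smoothGerms.mk _ hw₁) (smoothGerms.mk _ hw₂) (smoothGerms.mk g hg) =
      smoothGerms.mk (dirDeriv w g) ((hw₁.prodMk hw₂).dirDeriv hg) := by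
  apply Subtype.ext
  simp only [frameDeriv, derivation_mk_eq_pdu, derivation_mk_eq_pdv, Subring.coe_mul,
    Subring.coe_add, smoothGerms.coe_mk, ← Germ.coe_add, ← Germ.coe_mul, Germ.coe_eq]
  exact Eventually.of_forall fun p => (dirDeriv_eq w g p).symm

theorem isMongePrincipalFrame_of_isPrincipalField {f κ : ℝ × ℝ → ℝ} {w : ℝ × ℝ → ℝ × ℝ}
    (hf : ContDiffAt ℝ ∞ f 0) (hκ : ContDiffAt ℝ ∞ κ 0) (hw : ContDiffAt ℝ ∞ w 0)
    (h10 : pdu f 0 = 0) (h01 : pdv f 0 = 0) (h11 : pdv (pdu f) 0 = 0)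
    (hκ0 : κ 0 = pdu (pdu f) 0) (hw0 : w 0 = (1, 0)) (hk : pdu (pdu f) 0 ≠ pdv (pdv f) 0)
    (hprin : ∀ᶠ p in 𝓝 0, IsPrincipalField f κ w p) :
    IsMongePrincipalFrame (smoothGerms.derivation (1, 0)) (smoothGerms.derivation (0, 1))
      smoothGerms.eval (smoothGerms.mk f hf) (smoothGerms.mk κ hκ) (smoothGerms.mk _ hw.fst)
      (smoothGerms.mk _ hw.snd) (smoothGerms.mk _ hf.areaElement) := by
  refine ⟨smoothGerms.derivation_comm _ _, ?_, ?_, ?_, ?_, h10, h01, h11, hκ0, by simp [hw0],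
    by simp [hw0], by simp [areaElement, h10, h01], hk⟩
  all_goals
    apply Subtype.ext
    simp only [derivation_mk_eq_pdu, derivation_mk_eq_pdv, Subring.coe_mul, Subring.coe_add,
      Subring.coe_pow, Subring.coe_one, smoothGerms.coe_mk, ← Germ.coe_pow, ← Germ.coe_add,
      ← Germ.coe_one, ← Germ.coe_mul, Germ.coe_eq]
  · exact Eventually.of_forall fun p => Real.sq_sqrt (by positivity)
  · filter_upwards [hprin] with p hp using hp.mul_areaElement.1
  · filter_upwards [hprin] with p hp using hp.mul_areaElement.2
  · filter_upwards [hprin] with p hp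
    have hunit := hp.2.2
    simp only [Ee, Ff, Gg] at hunit
    simp only [Pi.add_apply, Pi.pow_apply, Pi.mul_apply, Pi.one_apply]
    linear_combination hunit

theorem ridge_criterion {d x y z a N P Q : ℝ} (hd : d ≠ 0) (hx : x = a) (hy : y * d = N)
    (hz : z * d ^ 2 = P - a * Q) : (x = 0 ∧ y = 0 ∧ z ≠ 0) ↔ (a = 0 ∧ N = 0 ∧ P ≠ 0) := by
  subst hx hy
  constructor
  · rintro ⟨rfl, rfl, hz0⟩
    refine ⟨rfl, zero_mul d, fun hP => hz0 ?_⟩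
    simpa [hP, hd] using hz
  · rintro ⟨rfl, hy0, hP⟩
    refine ⟨rfl, (mul_eq_zero.mp hy0).resolve_right hd, fun hz0 => hP ?_⟩
    simpa [hz0] using hz.symm

end MongePatch

theorem stmt11_general
    (f : ℝ × ℝ → ℝ) (hf : ContDiff ℝ (⊤ : ℕ∞) f)
    (k1 k2 a30 a21 a12 a40 a31 : ℝ) (hk : k1 ≠ k2)
    (h10 : pdu f 0 = 0) (h01 : pdv f 0 = 0)
    (h20 : pdu (pdu f) 0 = k1) (h11 : pdv (pdu f) 0 = 0) (h02 : pdv (pdv f) 0 = k2)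
    (h30 : pdu (pdu (pdu f)) 0 = a30) (h21 : pdv (pdu (pdu f)) 0 = a21)
    (h12 : pdv (pdv (pdu f)) 0 = a12)
    (h40 : pdu (pdu (pdu (pdu f))) 0 = a40)
    (h31 : pdv (pdu (pdu (pdu f))) 0 = a31)
    (κ : ℝ × ℝ → ℝ) (hκs : ContDiffAt ℝ (⊤ : ℕ∞) κ 0) (hκ0 : κ 0 = k1)
    (a50 : ℝ) (h50 : pdu (pdu (pdu (pdu (pdu f)))) 0 = a50)
    (w : ℝ × ℝ → ℝ × ℝ) (hws : ContDiffAt ℝ (⊤ : ℕ∞) w 0) (hw0 : w 0 = (1, 0))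
    (hw : ∀ᶠ p in nhds (0 : ℝ × ℝ), IsPrincipalField f κ w p) :
    (dirDeriv w κ 0 = 0 ∧ dirDeriv w (dirDeriv w κ) 0 = 0 ∧
        dirDeriv w (dirDeriv w (dirDeriv w κ)) 0 ≠ 0) ↔
      (a30 = 0 ∧ 3 * a21 ^ 2 + (a40 - 3 * k1 ^ 3) * (k1 - k2) = 0 ∧
        15 * a21 ^ 2 * a12 + 10 * a21 * a31 * (k1 - k2) + a50 * (k1 - k2) ^ 2 ≠ 0) := by
  have hframe := isMongePrincipalFrame_of_isPrincipalField hf.contDiffAt hκs hws h10 h01 h11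
    (hκ0.trans h20.symm) hw0 (by rwa [h20, h02]) hw
  have e1 := hframe.eval_frameDeriv
  have e2 := hframe.eval_frameDeriv_frameDeriv_mul
  have e3 := hframe.eval_frameDeriv_frameDeriv_frameDeriv_mul
  simp only [frameDeriv_mk, smoothGerms.eval_mk, derivation_mk_eq_pdu, derivation_mk_eq_pdv,
    h20, h02, h30, h21, h12, h40, h31, h50] at e1 e2 e3
  exact ridge_criterion (sub_ne_zero.mpr hk) e1 e2 e3

/-- The origin is a second order ridge point relative to `v₁`
(`v₁κ₁(0) = v₁²κ₁(0) = 0`, `v₁³κ₁(0) ≠ 0`) iff `a₃₀ = 0`,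
`3a₂₁² + (a₄₀ - 3k₁³)(k₁-k₂) = 0` and
`15a₂₁²a₁₂ + 10a₂₁a₃₁(k₁-k₂) + a₅₀(k₁-k₂)² ≠ 0`. -/
theorem stmt11
    (f : ℝ × ℝ → ℝ) (hf : ContDiff ℝ (⊤ : ℕ∞) f)
    (k1 k2 a30 a21 a12 a03 a40 a31 a22 : ℝ) (hk : k1 ≠ k2)
    (h00 : f 0 = 0) (h10 : pdu f 0 = 0) (h01 : pdv f 0 = 0)
    (h20 : pdu (pdu f) 0 = k1) (h11 : pdv (pdu f) 0 = 0) (h02 : pdv (pdv f) 0 = k2)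
    (h30 : pdu (pdu (pdu f)) 0 = a30) (h21 : pdv (pdu (pdu f)) 0 = a21)
    (h12 : pdv (pdv (pdu f)) 0 = a12) (h03 : pdv (pdv (pdv f)) 0 = a03)
    (h40 : pdu (pdu (pdu (pdu f))) 0 = a40)
    (h31 : pdv (pdu (pdu (pdu f))) 0 = a31)
    (h22 : pdv (pdv (pdu (pdu f))) 0 = a22)
    (κ : ℝ × ℝ → ℝ) (hκs : ContDiffAt ℝ (⊤ : ℕ∞) κ 0) (hκ0 : κ 0 = k1)
    (hκeig : ∀ᶠ p in nhds (0 : ℝ × ℝ), IsPrincipalCurvature f κ p)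
    (a50 : ℝ) (h50 : pdu (pdu (pdu (pdu (pdu f)))) 0 = a50)
    (w : ℝ × ℝ → ℝ × ℝ) (hws : ContDiffAt ℝ (⊤ : ℕ∞) w 0) (hw0 : w 0 = (1, 0))
    (hw : ∀ᶠ p in nhds (0 : ℝ × ℝ), IsPrincipalField f κ w p) :
    (dirDeriv w κ 0 = 0 ∧ dirDeriv w (dirDeriv w κ) 0 = 0 ∧
        dirDeriv w (dirDeriv w (dirDeriv w κ)) 0 ≠ 0) ↔
      (a30 = 0 ∧ 3 * a21 ^ 2 + (a40 - 3 * k1 ^ 3) * (k1 - k2) = 0 ∧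
        15 * a21 ^ 2 * a12 + 10 * a21 * a31 * (k1 - k2) + a50 * (k1 - k2) ^ 2 ≠ 0) :=
  stmt11_general f hf k1 k2 a30 a21 a12 a40 a31 hk h10 h01 h20 h11 h02 h30 h21 h12 h40 h31 κ hκs hκ0
    a50 h50 w hws hw0 hw
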